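/- For a 2×2 density matrix ρ with eigenvalues λ₁, λ₂ and an arbitrary 2×2 matrix σ, the generalized skew information satisfies I^ν_ρ(σ) = [1 − 2 m_ν(λ₁,λ₂)] ⟨Δσ⟩²_{λ₁}, where m_ν(λ₁,λ₂) = ((λ₁^ν + λ₂^ν)/2)^{1/ν}. -/

import Mathlib

open Matrix Finset
open scoped ComplexOrder

/-- Generalized mean `m_ν(a,b) = ((a^ν + b^ν)/2)^{1/ν}` for `ν < 0`, with
`m₀(a,b) = √(ab)`. -/
noncomputable def genMean (ν a b : ℝ) : ℝ :=
  if ν = 0 then Real.sqrt (a * b) else ((a ^ ν + b ^ ν) / 2) ^ ν⁻¹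

/-- Variance of an arbitrary operator `σ` in a pure state `ψ`. -/
noncomputable def varVec {d : ℕ} (ψ : Fin d → ℂ) (σ : Matrix (Fin d) (Fin d) ℂ) : ℂ :=
  (1 / 2 : ℂ) * (star ψ ⬝ᵥ ((σᴴ * σ + σ * σᴴ) *ᵥ ψ)) -
    ((‖star ψ ⬝ᵥ (σ *ᵥ ψ)‖ : ℝ) : ℂ) ^ 2

/-! Write `σᵢⱼ = ⟨uᵢ|σ|uⱼ⟩` in an orthonormal eigenbasis `u` of `ρ`. By Parseval,
`Tr[ρ(σ†σ + σσ†)] = ∑ᵢ λᵢ ∑ⱼ (|σⱼᵢ|² + |σᵢⱼ|²)`, and `|⟨uᵢ|σ†|uⱼ⟩| = |σⱼᵢ|`, so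
`I^ν_ρ(σ) = ½ ∑ᵢⱼ (λᵢ - m_ν(λᵢ,λⱼ)) (|σⱼᵢ|² + |σᵢⱼ|²)`. Since `m_ν(λ,λ) = λ` the diagonal terms
vanish; in dimension two the off-diagonal terms add up to
`(λ₁ + λ₂ - 2 m_ν(λ₁,λ₂)) · ½ (|σ₁₂|² + |σ₂₁|²)`, and `½ (|σ₁₂|² + |σ₂₁|²)` is the variance of `σ`
in `u₁`. -/

lemma genMean_self (ν : ℝ) {a : ℝ} (ha : 0 < a) : genMean ν a a = a := by
  unfold genMean
  split_ifs with hν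
  · exact Real.sqrt_mul_self ha.le
  · rw [add_self_div_two, ← Real.rpow_mul ha.le, mul_inv_cancel₀ hν, Real.rpow_one]

lemma genMean_comm (ν a b : ℝ) : genMean ν a b = genMean ν b a := by
  unfold genMean
  rw [mul_comm, add_comm]

lemma norm_dotProduct_conjTranspose_mulVec {d : ℕ} (σ : Matrix (Fin d) (Fin d) ℂ)
    (x y : Fin d → ℂ) : ‖star x ⬝ᵥ (σᴴ *ᵥ y)‖ = ‖star y ⬝ᵥ (σ *ᵥ x)‖ := by
  rw [dotProduct_mulVec, ← star_mulVec, star_dotProduct, norm_star]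

lemma Matrix.IsHermitian.dotProduct_mulVec_of_mulVec_eq_smul {d : ℕ}
    {ρ : Matrix (Fin d) (Fin d) ℂ} (hρ : ρ.IsHermitian) {v : Fin d → ℂ} {l : ℝ}
    (hv : ρ *ᵥ v = (l : ℂ) • v) (w : Fin d → ℂ) :
    star v ⬝ᵥ (ρ *ᵥ w) = l * (star v ⬝ᵥ w) := by
  rw [dotProduct_mulVec, ← hρ.eq, ← star_mulVec, hv, star_smul, smul_dotProduct,
    Complex.star_def, Complex.conj_ofReal, smul_eq_mul]

section Orthonormal

variable {d : ℕ} {u : Fin d → Fin d → ℂ}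

lemma conjTranspose_mul_of_orthonormal
    (hon : ∀ i j, star (u i) ⬝ᵥ u j = if i = j then 1 else 0) :
    (Matrix.of fun i => star (u i))ᴴ * Matrix.of (fun i => star (u i)) = 1 := by
  refine mul_eq_one_comm.mp ?_
  ext i j
  simpa [Matrix.mul_apply, Matrix.one_apply, Matrix.conjTranspose_apply, dotProduct] using hon i j

lemma dotProduct_eq_sum_of_orthonormal
    (hon : ∀ i j, star (u i) ⬝ᵥ u j = if i = j then 1 else 0) (x y : Fin d → ℂ) :
    star x ⬝ᵥ y = ∑ i, (star x ⬝ᵥ u i) * (star (u i) ⬝ᵥ y) := by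
  set W : Matrix (Fin d) (Fin d) ℂ := Matrix.of fun i => star (u i)
  have hW : ∀ v i, (W *ᵥ v) i = star (u i) ⬝ᵥ v := fun _ _ => rfl
  calc star x ⬝ᵥ y = star x ⬝ᵥ (Wᴴ *ᵥ (W *ᵥ y)) := by
        rw [mulVec_mulVec, conjTranspose_mul_of_orthonormal hon, one_mulVec]
    _ = star (W *ᵥ x) ⬝ᵥ (W *ᵥ y) := by rw [dotProduct_mulVec, star_mulVec]
    _ = _ := by
        refine Finset.sum_congr rfl fun i _ => ?_
        rw [Pi.star_apply, hW, hW, star_dotProduct, star_star]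

lemma dotProduct_self_eq_sum_norm_sq
    (hon : ∀ i j, star (u i) ⬝ᵥ u j = if i = j then 1 else 0) (y : Fin d → ℂ) :
    star y ⬝ᵥ y = ∑ i, ((‖star (u i) ⬝ᵥ y‖ : ℝ) : ℂ) ^ 2 := by
  rw [dotProduct_eq_sum_of_orthonormal hon]
  refine Finset.sum_congr rfl fun i _ => ?_
  rw [star_dotProduct, Complex.star_def, Complex.conj_mul']

lemma dotProduct_conjTranspose_mul_self_mulVec
    (hon : ∀ i j, star (u i) ⬝ᵥ u j = if i = j then 1 else 0) (τ : Matrix (Fin d) (Fin d) ℂ)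
    (x : Fin d → ℂ) :
    star x ⬝ᵥ ((τᴴ * τ) *ᵥ x) = ∑ i, ((‖star (u i) ⬝ᵥ (τ *ᵥ x)‖ : ℝ) : ℂ) ^ 2 := by
  rw [← dotProduct_self_eq_sum_norm_sq hon, ← mulVec_mulVec, dotProduct_mulVec, star_mulVec]

lemma trace_eq_sum_of_orthonormal
    (hon : ∀ i j, star (u i) ⬝ᵥ u j = if i = j then 1 else 0) (A : Matrix (Fin d) (Fin d) ℂ) :
    A.trace = ∑ i, star (u i) ⬝ᵥ (A *ᵥ u i) := by
  set W : Matrix (Fin d) (Fin d) ℂ := Matrix.of fun i => star (u i)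
  calc A.trace = (W * A * Wᴴ).trace := by
        rw [trace_mul_cycle, conjTranspose_mul_of_orthonormal hon, one_mul]
    _ = _ := by
        refine Finset.sum_congr rfl fun i _ => ?_
        simp only [W, diag_apply, mul_apply, mulVec, dotProduct, conjTranspose_apply, of_apply,
          Pi.star_apply, star_star, Finset.mul_sum, mul_assoc]

lemma dotProduct_anticommutator_mulVec_of_orthonormal
    (hon : ∀ i j, star (u i) ⬝ᵥ u j = if i = j then 1 else 0) (σ : Matrix (Fin d) (Fin d) ℂ)
    (x : Fin d → ℂ) :
    star x ⬝ᵥ ((σᴴ * σ + σ * σᴴ) *ᵥ x) = ∑ j, (((‖star (u j) ⬝ᵥ (σ *ᵥ x)‖ : ℝ) : ℂ) ^ 2 +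
      ((‖star x ⬝ᵥ (σ *ᵥ u j)‖ : ℝ) : ℂ) ^ 2) := by
  have hσ : σ * σᴴ = σᴴᴴ * σᴴ := by rw [conjTranspose_conjTranspose]
  rw [add_mulVec, dotProduct_add, hσ, dotProduct_conjTranspose_mul_self_mulVec hon,
    dotProduct_conjTranspose_mul_self_mulVec hon, ← Finset.sum_add_distrib]
  simp only [norm_dotProduct_conjTranspose_mulVec]

lemma skewInfo_eq_sum_of_eigenbasis {ρ : Matrix (Fin d) (Fin d) ℂ} (hρ : ρ.IsHermitian)
    (hon : ∀ i j, star (u i) ⬝ᵥ u j = if i = j then 1 else 0) {l : Fin d → ℝ}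
    (heig : ∀ i, ρ *ᵥ u i = (l i : ℂ) • u i) (m : Fin d → Fin d → ℝ)
    (σ : Matrix (Fin d) (Fin d) ℂ) :
    (1 / 2 : ℂ) * (ρ * (σᴴ * σ + σ * σᴴ)).trace -
        (1 / 2 : ℂ) * ∑ i, ∑ j, (m i j : ℂ) *
          (((‖star (u i) ⬝ᵥ (σᴴ *ᵥ u j)‖ : ℝ) : ℂ) ^ 2 +
            ((‖star (u i) ⬝ᵥ (σ *ᵥ u j)‖ : ℝ) : ℂ) ^ 2) =
      (1 / 2 : ℂ) * ∑ i, ∑ j, ((l i - m i j : ℝ) : ℂ) *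
          (((‖star (u j) ⬝ᵥ (σ *ᵥ u i)‖ : ℝ) : ℂ) ^ 2 +
            ((‖star (u i) ⬝ᵥ (σ *ᵥ u j)‖ : ℝ) : ℂ) ^ 2) := by
  have htrace : (ρ * (σᴴ * σ + σ * σᴴ)).trace = ∑ i, ∑ j, (l i : ℂ) *
      (((‖star (u j) ⬝ᵥ (σ *ᵥ u i)‖ : ℝ) : ℂ) ^ 2 +
        ((‖star (u i) ⬝ᵥ (σ *ᵥ u j)‖ : ℝ) : ℂ) ^ 2) := by
    rw [trace_eq_sum_of_orthonormal hon]
    refine Finset.sum_congr rfl fun i _ => ?_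
    rw [← mulVec_mulVec, hρ.dotProduct_mulVec_of_mulVec_eq_smul (heig i),
      dotProduct_anticommutator_mulVec_of_orthonormal hon, Finset.mul_sum]
  simp only [htrace, norm_dotProduct_conjTranspose_mulVec, ← mul_sub, ← Finset.sum_sub_distrib,
    ← sub_mul, Complex.ofReal_sub]

end Orthonormal

theorem stmt11_general (ρ σ : Matrix (Fin 2) (Fin 2) ℂ)
    (hρ : ρ.PosSemidef)
    (u : Fin 2 → Fin 2 → ℂ) (l : Fin 2 → ℝ)
    (hon : ∀ i j, star (u i) ⬝ᵥ u j = if i = j then 1 else 0)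
    (heig : ∀ i, ρ *ᵥ u i = (l i : ℂ) • u i)
    (hpos : ∀ i, 0 < l i) (hsum : l 0 + l 1 = 1)
    (ν : ℝ) :
    (1 / 2 : ℂ) * (ρ * (σᴴ * σ + σ * σᴴ)).trace -
        (1 / 2 : ℂ) * ∑ i, ∑ j, ((genMean ν (l i) (l j) : ℝ) : ℂ) *
          (((‖star (u i) ⬝ᵥ (σᴴ *ᵥ u j)‖ : ℝ) : ℂ) ^ 2 +
            ((‖star (u i) ⬝ᵥ (σ *ᵥ u j)‖ : ℝ) : ℂ) ^ 2) =
      ((1 - 2 * genMean ν (l 0) (l 1) : ℝ) : ℂ) * varVec (u 0) σ := by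
  have hsumC : (l 0 : ℂ) + l 1 = 1 := by exact_mod_cast hsum
  rw [skewInfo_eq_sum_of_eigenbasis hρ.1 hon heig, varVec,
    dotProduct_anticommutator_mulVec_of_orthonormal hon]
  simp only [Fin.sum_univ_two, genMean_self ν (hpos 0), genMean_self ν (hpos 1),
    genMean_comm ν (l 1) (l 0), sub_self]
  push_cast
  linear_combination (((‖star (u 0) ⬝ᵥ (σ *ᵥ u 1)‖ : ℝ) : ℂ) ^ 2 +
    ((‖star (u 1) ⬝ᵥ (σ *ᵥ u 0)‖ : ℝ) : ℂ) ^ 2) / 2 * hsumC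

theorem stmt11 (ρ σ : Matrix (Fin 2) (Fin 2) ℂ)
    (hρ : ρ.PosSemidef) (htr : ρ.trace = 1)
    (u : Fin 2 → Fin 2 → ℂ) (l : Fin 2 → ℝ)
    (hon : ∀ i j, star (u i) ⬝ᵥ u j = if i = j then 1 else 0)
    (heig : ∀ i, ρ *ᵥ u i = (l i : ℂ) • u i)
    (hpos : ∀ i, 0 < l i) (hsum : l 0 + l 1 = 1)
    (ν : ℝ) (hν : ν ≤ 0) :
    (1 / 2 : ℂ) * (ρ * (σᴴ * σ + σ * σᴴ)).trace -
        (1 / 2 : ℂ) * ∑ i, ∑ j, ((genMean ν (l i) (l j) : ℝ) : ℂ) *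
          (((‖star (u i) ⬝ᵥ (σᴴ *ᵥ u j)‖ : ℝ) : ℂ) ^ 2 +
            ((‖star (u i) ⬝ᵥ (σ *ᵥ u j)‖ : ℝ) : ℂ) ^ 2) =
      ((1 - 2 * genMean ν (l 0) (l 1) : ℝ) : ℂ) * varVec (u 0) σ :=
  stmt11_general ρ σ hρ u l hon heig hpos hsum ν
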